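/- arXiv:2301.07434 — 2 statements merged into one kernel-verified Lean document; each statement's English description precedes it below -/
import Mathlib

section
/- Let k0 > 0 and for each n ∈ ℕ let k_0(n), …, k_n(n) ∈ [−k0, k0] be frequencies satisfying Π_{l=0, l≠j}^{n} |k_l(n) − k_j(n)| ≥ κⁿ for some κ > 0, for all n ∈ ℕ and j ∈ {0,…,n}. For a ∈ ℝ∖[−k0,k0] define C_j(n) = Π_{l=0, l≠j}^{n} (k_l(n) − a)/(k_l(n) − k_j(n)). Then the functions F_n(z) = Σ_{j=0}^{n} C_j(n) e^{i k_j(n) z} converge to z ↦ e^{iaz} in 𝒜₁(ℂ) as n → ∞; in particular, together with their representation F_n(z) = ∫_{−k0}^{k0} e^{ikz} dμ_n(k) via the complex Borel measure μ_n = Σ_{j=0}^n C_j(n) δ_{k_j(n)}, the sequence F_n is superoscillating. -/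
open MeasureTheory Complex Filter Set

/-- Integral of a complex-valued function against a complex Borel measure,
defined via the Jordan decompositions of the real and imaginary parts of the measure. -/
noncomputable def cmInt (μ : ComplexMeasure ℝ) (f : ℝ → ℂ) : ℂ :=
    ((∫ x, f x ∂((ComplexMeasure.re μ).toJordanDecomposition.posPart))
      - (∫ x, f x ∂((ComplexMeasure.re μ).toJordanDecomposition.negPart)))
    + Complex.I * ((∫ x, f x ∂((ComplexMeasure.im μ).toJordanDecomposition.posPart))
      - (∫ x, f x ∂((ComplexMeasure.im μ).toJordanDecomposition.negPart)))

/-- The complex measure `μ` is supported in the set `S`. -/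
def cmSupportedIn (μ : ComplexMeasure ℝ) (S : Set ℝ) : Prop :=
  ∀ B : Set ℝ, MeasurableSet B → Disjoint B S → μ B = 0

/-- Membership in the space `𝒜₁(ℂ)` of exponentially bounded entire functions. -/
def MemA1 (F : ℂ → ℂ) : Prop :=
  Differentiable ℂ F ∧ ∃ A B : ℝ, 0 ≤ A ∧ 0 ≤ B ∧
    ∀ z : ℂ, ‖F z‖ ≤ A * Real.exp (B * ‖z‖)

/-- Convergence `F n → G` in `𝒜₁(ℂ)` as `n → ∞`: for some `B ≥ 0`,
`sup_z |F n z - G z| e^{-B|z|} → 0`. -/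
def TendstoA1 (F : ℕ → ℂ → ℂ) (G : ℂ → ℂ) : Prop :=
  ∃ B : ℝ, 0 ≤ B ∧ ∀ ε : ℝ, 0 < ε → ∃ N : ℕ, ∀ n ≥ N, ∀ z : ℂ,
    ‖F n z - G z‖ ≤ ε * Real.exp (B * ‖z‖)

/-- Convergence `F δ → G` in `𝒜₁(ℂ)` as `δ → 0⁺`: for some `B ≥ 0`,
`sup_z |F δ z - G z| e^{-B|z|} → 0` as `δ → 0⁺`. -/
def TendstoA1Zero (F : ℝ → ℂ → ℂ) (G : ℂ → ℂ) : Prop :=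
  ∃ B : ℝ, 0 ≤ B ∧ ∀ ε : ℝ, 0 < ε → ∃ δ₀ : ℝ, 0 < δ₀ ∧ ∀ δ : ℝ, 0 < δ → δ < δ₀ →
    ∀ z : ℂ, ‖F δ z - G z‖ ≤ ε * Real.exp (B * ‖z‖)

/-!
The weights `C_j(n)` are the values at `a` of the Lagrange basis polynomials of the nodes
`k_j(n)`, so `∑_j C_j(n) k_j(n)^m = a^m` for `m ≤ n`. Hence `F_n` reproduces the Taylor
polynomial of degree `n` of `z ↦ e^{iaz}` exactly, and `F_n(z) - e^{iaz}` is a combination of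
Taylor remainders of order `n + 1`, each at most `(M|z|)^{n+1}/(n+1)! · e^{M|z|}` where
`M = max(|a|, k0)`. The separation condition gives `|C_j(n)| ≤ (2M/κ)^n ≤ R^n` with
`R = max(1, 2M/κ)`, and `(M|z|)^{n+1}/(n+1)! ≤ e^{2RM|z|}/(2R)^{n+1}` absorbs this geometric
growth, leaving an error `(n+2) 2^{-(n+1)} e^{(2R+1)M|z|}`.

The measure `μ_n = ∑_j C_j(n) δ_{k_j(n)}` has as Jordan decomposition the sums over the
positive and negative weights: these are mutually singular because the nodes are distinct.
-/

open Finset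
open scoped Nat NNReal

theorem Real.exp_sub_sum_range_le {y : ℝ} (hy : 0 ≤ y) (N : ℕ) :
    Real.exp y - ∑ m ∈ range N, y ^ m / m ! ≤ y ^ N / N ! * Real.exp y := by
  have hs : Summable fun m : ℕ => y ^ m / m ! := NormedSpace.expSeries_div_summable y
  have hexp : Real.exp y = ∑' m, y ^ m / m ! := by
    rw [Real.exp_eq_exp_ℝ, NormedSpace.exp_eq_tsum_div]
  calc Real.exp y - ∑ m ∈ range N, y ^ m / m !
      = ∑' m, y ^ (m + N) / (m + N)! := by
        rw [hexp, ← hs.sum_add_tsum_nat_add N, add_sub_cancel_left]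
    _ ≤ ∑' m, y ^ N / N ! * (y ^ m / m !) := by
        refine ((summable_nat_add_iff N).2 hs).tsum_le_tsum (fun m => ?_) (hs.mul_left _)
        have hfact : (N ! * m ! : ℝ) ≤ (m + N)! := by
          exact_mod_cast Nat.le_of_dvd (Nat.factorial_pos _)
            (add_comm N m ▸ Nat.factorial_mul_factorial_dvd_factorial_add N m)
        rw [pow_add, div_mul_div_comm, mul_comm (y ^ m)]
        exact div_le_div_of_nonneg_left (by positivity) (by positivity) hfact
    _ = y ^ N / N ! * Real.exp y := by rw [tsum_mul_left, hexp]

theorem Complex.norm_exp_sub_sum_range_le (u : ℂ) (N : ℕ) :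
    ‖Complex.exp u - ∑ m ∈ range N, u ^ m / (m ! : ℂ)‖ ≤ ‖u‖ ^ N / N ! * Real.exp ‖u‖ :=
  (Complex.norm_exp_sub_sum_le_exp_norm_sub_sum u N).trans
    (Real.exp_sub_sum_range_le (norm_nonneg u) N)

theorem pow_div_factorial_le_exp_mul_div_pow {y L : ℝ} (hy : 0 ≤ y) (hL : 0 < L) (N : ℕ) :
    y ^ N / N ! ≤ Real.exp (L * y) / L ^ N := by
  rw [le_div_iff₀ (by positivity), div_mul_eq_mul_div, ← mul_pow, mul_comm y]
  exact Real.pow_div_factorial_le_exp _ (by positivity) N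

namespace Lagrange

variable {F ι : Type*} [Field F] [DecidableEq ι] {s : Finset ι} {v : ι → F}

theorem eval_basis_eq_prod (x : F) (j : ι) :
    (Lagrange.basis s v j).eval x = ∏ l ∈ s.erase j, (v l - x) / (v l - v j) := by
  rw [Lagrange.basis, Polynomial.eval_prod]
  refine prod_congr rfl fun l _ => ?_
  rw [basisDivisor, Polynomial.eval_mul, Polynomial.eval_C, Polynomial.eval_sub,
    Polynomial.eval_X, Polynomial.eval_C, ← neg_sub (v l) (v j), ← neg_sub (v l) x,
    inv_neg, div_eq_inv_mul]
  ring

theorem sum_eval_basis_mul_pow (hvs : Set.InjOn v s) (x : F) {m : ℕ} (hm : m < #s) :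
    ∑ j ∈ s, (Lagrange.basis s v j).eval x * v j ^ m = x ^ m := by
  have hdeg : (Polynomial.X ^ m : Polynomial F).degree < #s := by
    rw [Polynomial.degree_X_pow]; exact_mod_cast hm
  have h := congrArg (Polynomial.eval x) (eq_interpolate hvs hdeg)
  simp only [Polynomial.eval_pow, Polynomial.eval_X, interpolate_apply,
    Polynomial.eval_finsetSum, Polynomial.eval_mul, Polynomial.eval_C] at h
  rw [h]
  exact sum_congr rfl fun j _ => mul_comm _ _

end Lagrange

theorem Set.injOn_of_prod_erase_abs_sub_pos {ι : Type*} [DecidableEq ι] {s : Finset ι}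
    {v : ι → ℝ} (h : ∀ j ∈ s, 0 < ∏ l ∈ s.erase j, |v l - v j|) : Set.InjOn v s := by
  intro i hi j hj hij
  by_contra hne
  have hpos := h j hj
  rw [prod_eq_zero (mem_erase.2 ⟨hne, hi⟩) (by rw [hij, sub_self, abs_zero])] at hpos
  exact hpos.false

theorem abs_prod_div_sub_le {ι : Type*} {t : Finset ι} {v : ι → ℝ} {x y D κ : ℝ}
    (hκ : 0 < κ) (hD : ∀ l ∈ t, |v l - x| ≤ D) (hsep : κ ^ #t ≤ ∏ l ∈ t, |v l - y|) :
    |∏ l ∈ t, (v l - x) / (v l - y)| ≤ (D / κ) ^ #t := by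
  have hnum : ∏ l ∈ t, |v l - x| ≤ D ^ #t := by
    rw [← prod_const]; exact prod_le_prod (fun _ _ => abs_nonneg _) hD
  rw [abs_prod, prod_congr rfl fun l _ => abs_div _ _, prod_div_distrib, div_pow]
  calc (∏ l ∈ t, |v l - x|) / ∏ l ∈ t, |v l - y|
      ≤ (∏ l ∈ t, |v l - x|) / κ ^ #t :=
        div_le_div_of_nonneg_left (prod_nonneg fun _ _ => abs_nonneg _) (by positivity) hsep
    _ ≤ D ^ #t / κ ^ #t := div_le_div_of_nonneg_right hnum (by positivity)

theorem norm_sum_mul_exp_sub_exp_le {ι : Type*} {s : Finset ι} {c v : ι → ℝ} {x M K : ℝ}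
    (hpow : ∀ m < #s, ∑ j ∈ s, c j * v j ^ m = x ^ m)
    (hv : ∀ j ∈ s, |v j| ≤ M) (hx : |x| ≤ M) (hc : ∀ j ∈ s, |c j| ≤ K) (z : ℂ) :
    ‖∑ j ∈ s, (c j : ℂ) * exp (I * v j * z) - exp (I * x * z)‖
      ≤ (#s * K + 1) * ((M * ‖z‖) ^ #s / (#s)! * Real.exp (M * ‖z‖)) := by
  set N := #s
  set g := (M * ‖z‖) ^ N / N ! * Real.exp (M * ‖z‖)
  set T : ℝ → ℂ := fun w => ∑ m ∈ range N, (I * w * z) ^ m / (m ! : ℂ)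
  have hrem : ∀ w : ℝ, |w| ≤ M → ‖exp (I * w * z) - T w‖ ≤ g := by
    intro w hw
    have hu : ‖I * w * z‖ ≤ M * ‖z‖ := by
      rw [norm_mul, norm_mul, norm_I, one_mul, norm_real, Real.norm_eq_abs]
      gcongr
    calc ‖exp (I * w * z) - T w‖ ≤ ‖I * w * z‖ ^ N / N ! * Real.exp ‖I * w * z‖ :=
          norm_exp_sub_sum_range_le _ N
      _ ≤ (M * ‖z‖) ^ N / N ! * Real.exp (M * ‖z‖) := by
          have hMz : 0 ≤ M * ‖z‖ := (norm_nonneg _).trans hu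
          gcongr
  have htaylor : ∑ j ∈ s, (c j : ℂ) * T (v j) = T x := by
    simp only [T, mul_sum]
    rw [sum_comm]
    refine sum_congr rfl fun m hm => ?_
    have hm' : ∑ j ∈ s, (c j : ℂ) * (v j : ℂ) ^ m = (x : ℂ) ^ m := by
      exact_mod_cast hpow m (mem_range.1 hm)
    calc ∑ j ∈ s, (c j : ℂ) * ((I * v j * z) ^ m / m !)
        = (I * z) ^ m / m ! * ∑ j ∈ s, (c j : ℂ) * (v j : ℂ) ^ m := by
          rw [mul_sum]; exact sum_congr rfl fun j _ => by ring
      _ = (I * x * z) ^ m / m ! := by rw [hm']; ring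
  have hsplit : ∑ j ∈ s, (c j : ℂ) * exp (I * v j * z) - exp (I * x * z)
      = ∑ j ∈ s, (c j : ℂ) * (exp (I * v j * z) - T (v j)) - (exp (I * x * z) - T x) := by
    rw [← htaylor]; simp only [mul_sub, sum_sub_distrib]; ring
  rw [hsplit]
  calc _ ≤ ∑ j ∈ s, ‖(c j : ℂ) * (exp (I * v j * z) - T (v j))‖ + ‖exp (I * x * z) - T x‖ :=
        (norm_sub_le _ _).trans (add_le_add_left (norm_sum_le _ _) _)
    _ ≤ ∑ j ∈ s, K * g + g := by
        gcongr with j hj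
        · rw [norm_mul, norm_real, Real.norm_eq_abs]
          exact mul_le_mul (hc j hj) (hrem _ (hv j hj)) (norm_nonneg _)
            ((abs_nonneg _).trans (hc j hj))
        · exact hrem x hx
    _ = (N * K + 1) * g := by rw [sum_const, nsmul_eq_mul]; ring

theorem norm_sum_eval_basis_mul_exp_sub_exp_le {n : ℕ} {v : ℕ → ℝ} {a κ M R : ℝ} (hκ : 0 < κ)
    (hv : ∀ j ≤ n, |v j| ≤ M) (ha : |a| ≤ M) (hR : 1 ≤ R) (hMR : 2 * M / κ ≤ R)
    (hsep : ∀ j ≤ n, κ ^ n ≤ ∏ l ∈ (range (n + 1)).erase j, |v l - v j|) (z : ℂ) :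
    ‖∑ j ∈ range (n + 1), (((Lagrange.basis (range (n + 1)) v j).eval a : ℝ) : ℂ)
        * exp (I * v j * z) - exp (I * a * z)‖
      ≤ (n + 2) / 2 ^ (n + 1) * Real.exp ((2 * R + 1) * M * ‖z‖) := by
  set s := range (n + 1)
  have hs : ∀ j ∈ s, j ≤ n := fun j hj => mem_range_succ_iff.1 hj
  have hcard : ∀ j ∈ s, #(s.erase j) = n := fun j hj => by
    rw [card_erase_of_mem hj, card_range, Nat.add_sub_cancel]
  have hinj : Set.InjOn v s := Set.injOn_of_prod_erase_abs_sub_pos fun j hj =>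
    (pow_pos hκ n).trans_le (hsep j (hs j hj))
  have hM : 0 ≤ M := (abs_nonneg a).trans ha
  have hcoeff : ∀ j ∈ s, |(Lagrange.basis s v j).eval a| ≤ R ^ n := fun j hj => by
    rw [Lagrange.eval_basis_eq_prod, ← hcard j hj]
    have hdist : ∀ l ∈ s.erase j, |v l - a| ≤ 2 * M := fun l hl => by
      have := hv l (hs l (mem_of_mem_erase hl))
      calc |v l - a| ≤ |v l| + |a| := abs_sub _ _
        _ ≤ 2 * M := by linarith
    refine (abs_prod_div_sub_le hκ hdist ((hcard j hj).symm ▸ hsep j (hs j hj))).trans ?_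
    gcongr
  have hweights : ((n : ℝ) + 1) * R ^ n + 1 ≤ (n + 2) * R ^ (n + 1) := by
    have h1 : 1 ≤ R ^ n := one_le_pow₀ hR
    have h2 : R ^ n ≤ R ^ (n + 1) := pow_le_pow_right₀ hR n.le_succ
    nlinarith
  have hR0 : 0 < R := zero_lt_one.trans_le hR
  calc _ ≤ (#s * R ^ n + 1) * ((M * ‖z‖) ^ #s / (#s)! * Real.exp (M * ‖z‖)) :=
        norm_sum_mul_exp_sub_exp_le (fun m hm => Lagrange.sum_eval_basis_mul_pow hinj a hm)
          (fun j hj => hv j (hs j hj)) ha hcoeff z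
    _ ≤ ((n + 1) * R ^ n + 1)
          * (Real.exp (2 * R * (M * ‖z‖)) / (2 * R) ^ (n + 1) * Real.exp (M * ‖z‖)) := by
        rw [card_range]; push_cast
        gcongr _ * (?_ * _)
        exact pow_div_factorial_le_exp_mul_div_pow (by positivity) (by positivity) _
    _ = ((n + 1) * R ^ n + 1) / (2 ^ (n + 1) * R ^ (n + 1))
          * Real.exp ((2 * R + 1) * M * ‖z‖) := by
        rw [show (2 * R + 1) * M * ‖z‖ = 2 * R * (M * ‖z‖) + M * ‖z‖ by ring, Real.exp_add,
          mul_pow]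
        ring
    _ ≤ (n + 2) * R ^ (n + 1) / (2 ^ (n + 1) * R ^ (n + 1))
          * Real.exp ((2 * R + 1) * M * ‖z‖) := by gcongr
    _ = (n + 2) / 2 ^ (n + 1) * Real.exp ((2 * R + 1) * M * ‖z‖) := by
        rw [mul_div_mul_right _ _ (pow_pos hR0 _).ne']

theorem tendstoA1_of_norm_sub_le {F : ℕ → ℂ → ℂ} {G : ℂ → ℂ} {B : ℝ} (hB : 0 ≤ B)
    {ε : ℕ → ℝ} (hε : Tendsto ε atTop (nhds 0))
    (h : ∀ n z, ‖F n z - G z‖ ≤ ε n * Real.exp (B * ‖z‖)) : TendstoA1 F G := by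
  refine ⟨B, hB, fun η hη => ?_⟩
  obtain ⟨N, hN⟩ := eventually_atTop.1 (hε.eventually (eventually_le_nhds hη))
  exact ⟨N, fun n hn z => (h n z).trans (by gcongr; exact hN n hn)⟩

theorem tendsto_add_two_div_two_pow :
    Tendsto (fun n : ℕ => ((n : ℝ) + 2) / 2 ^ (n + 1)) atTop (nhds 0) := by
  have h1 := tendsto_pow_const_div_const_pow_of_one_lt 1 one_lt_two
  have h2 := tendsto_pow_atTop_nhds_zero_of_lt_one (by norm_num : (0 : ℝ) ≤ 1 / 2)
    (by norm_num)
  convert (h1.div_const 2).add h2 using 1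
  · ext n; rw [one_div, inv_pow, pow_one]; field_simp; ring
  · simp

theorem MeasureTheory.Measure.MutuallySingular.finsetSum_left {α ι : Type*} [MeasurableSpace α]
    {s : Finset ι} {μ : ι → Measure α} {ν : Measure α} (h : ∀ i ∈ s, μ i ⟂ₘ ν) :
    (∑ i ∈ s, μ i) ⟂ₘ ν :=
  Finset.sum_induction _ (· ⟂ₘ ν) (fun _ _ => add_left) zero_left h

section DiracSum

variable {α ι : Type*} [MeasurableSpace α] {s : Finset ι} {v : ι → α}

theorem measureReal_sum_smul_dirac (p : ι → ℝ≥0) {B : Set α} [DecidablePred (· ∈ B)]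
    (hB : MeasurableSet B) :
    (∑ j ∈ s, p j • Measure.dirac (v j)).real B = ∑ j ∈ s, if v j ∈ B then (p j : ℝ) else 0 := by
  rw [measureReal_def, Measure.finsetSum_apply, ENNReal.toReal_sum fun j _ => measure_ne_top _ _]
  simp [Measure.dirac_apply' _ hB, Set.indicator_apply, apply_ite]

variable [MeasurableSingletonClass α]

theorem MeasureTheory.Measure.mutuallySingular_dirac_dirac {x y : α} (h : x ≠ y) :
    Measure.dirac x ⟂ₘ Measure.dirac y :=
  ⟨{y}, measurableSet_singleton y, by simp [h], by simp⟩

theorem mutuallySingular_sum_smul_dirac (hv : Set.InjOn v s) {p q : ι → ℝ≥0}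
    (hpq : ∀ j ∈ s, p j = 0 ∨ q j = 0) :
    (∑ j ∈ s, p j • Measure.dirac (v j)) ⟂ₘ ∑ j ∈ s, q j • Measure.dirac (v j) := by
  refine Measure.MutuallySingular.finsetSum_left fun i hi =>
    (Measure.MutuallySingular.finsetSum_left fun j hj => ?_).symm
  by_cases hij : j = i
  · subst hij
    rcases hpq j hi with h | h <;> simp [h]
  · exact (((Measure.mutuallySingular_dirac_dirac fun h => hij (hv hj hi h)).smul_nnreal _).symm
      |>.smul_nnreal _).symm

theorem integral_sum_smul_dirac {E : Type*} [NormedAddCommGroup E] [NormedSpace ℝ E]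
    [CompleteSpace E] (p : ι → ℝ≥0) (f : α → E) :
    ∫ x, f x ∂(∑ j ∈ s, p j • Measure.dirac (v j)) = ∑ j ∈ s, (p j : ℝ) • f (v j) := by
  rw [integral_finsetSum_measure fun j _ => (integrable_dirac (by simp)).smul_measure_nnreal]
  simp [integral_smul_nnreal_measure, MeasureTheory.integral_dirac, NNReal.smul_def]

noncomputable def diracJordanDecomposition (hv : Set.InjOn v s) (c : ι → ℝ) :
    JordanDecomposition α where
  posPart := ∑ j ∈ s, (c j).toNNReal • Measure.dirac (v j)
  negPart := ∑ j ∈ s, (-c j).toNNReal • Measure.dirac (v j)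
  mutuallySingular := mutuallySingular_sum_smul_dirac hv fun j _ => by
    rcases le_total (c j) 0 with h | h <;> simp [h]

theorem diracJordanDecomposition_toSignedMeasure_apply (hv : Set.InjOn v s) (c : ι → ℝ)
    {B : Set α} [DecidablePred (· ∈ B)] (hB : MeasurableSet B) :
    (diracJordanDecomposition hv c).toSignedMeasure B = ∑ j ∈ s, if v j ∈ B then c j else 0 := by
  rw [JordanDecomposition.toSignedMeasure, sub_apply,
    Measure.toSignedMeasure_apply_measurable hB, Measure.toSignedMeasure_apply_measurable hB]
  simp only [diracJordanDecomposition]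
  rw [measureReal_sum_smul_dirac _ hB, measureReal_sum_smul_dirac _ hB, ← sum_sub_distrib]
  refine sum_congr rfl fun j _ => ?_
  split_ifs
  · rw [Real.coe_toNNReal', Real.coe_toNNReal', max_zero_sub_max_neg_zero_eq_self]
  · rw [sub_zero]

theorem integral_posPart_sub_integral_negPart_diracJordanDecomposition {E : Type*}
    [NormedAddCommGroup E] [NormedSpace ℝ E] [CompleteSpace E]
    (hv : Set.InjOn v s) (c : ι → ℝ) (f : α → E) :
    ∫ x, f x ∂(diracJordanDecomposition hv c).posPart
      - ∫ x, f x ∂(diracJordanDecomposition hv c).negPart = ∑ j ∈ s, c j • f (v j) := by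
  simp only [diracJordanDecomposition]
  rw [integral_sum_smul_dirac, integral_sum_smul_dirac, ← sum_sub_distrib]
  refine sum_congr rfl fun j _ => ?_
  rw [← sub_smul, Real.coe_toNNReal', Real.coe_toNNReal', max_zero_sub_max_neg_zero_eq_self]

end DiracSum

theorem cmInt_toComplexMeasure_zero (j : JordanDecomposition ℝ) (f : ℝ → ℂ) :
    cmInt (j.toSignedMeasure.toComplexMeasure 0) f = ∫ x, f x ∂j.posPart - ∫ x, f x ∂j.negPart := by
  rw [cmInt, SignedMeasure.re_toComplexMeasure, SignedMeasure.im_toComplexMeasure,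
    JordanDecomposition.toJordanDecomposition_toSignedMeasure,
    SignedMeasure.toJordanDecomposition_zero, JordanDecomposition.zero_posPart,
    JordanDecomposition.zero_negPart, integral_zero_measure, sub_zero, mul_zero, add_zero]

open Classical in
theorem exists_complexMeasure_sum_dirac {ι : Type*} {s : Finset ι} {v : ι → ℝ}
    (hv : Set.InjOn v s) (c : ι → ℝ) {S : Set ℝ} (hvS : ∀ j ∈ s, v j ∈ S) :
    ∃ μ : ComplexMeasure ℝ, cmSupportedIn μ S ∧
      (∀ B : Set ℝ, MeasurableSet B → μ B = ∑ j ∈ s, if v j ∈ B then (c j : ℂ) else 0) ∧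
      ∀ f : ℝ → ℂ, cmInt μ f = ∑ j ∈ s, (c j : ℂ) * f (v j) := by
  set J := diracJordanDecomposition hv c
  have happly : ∀ B : Set ℝ, MeasurableSet B →
      J.toSignedMeasure.toComplexMeasure 0 B = ∑ j ∈ s, if v j ∈ B then (c j : ℂ) else 0 := by
    intro B hB
    rw [SignedMeasure.toComplexMeasure_apply,
      diracJordanDecomposition_toSignedMeasure_apply hv c hB]
    simp [Complex.ext_iff, apply_ite]
  refine ⟨J.toSignedMeasure.toComplexMeasure 0, fun B hB hBS => ?_, happly, fun f => ?_⟩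
  · rw [happly B hB]
    exact sum_eq_zero fun j hj => if_neg (Set.disjoint_right.1 hBS (hvS j hj))
  · rw [cmInt_toComplexMeasure_zero, integral_posPart_sub_integral_negPart_diracJordanDecomposition]
    simp [Complex.real_smul]

open scoped Classical

theorem statement10_general (k0 : ℝ) (κ : ℝ) (hκ : 0 < κ)
    (k : ℕ → ℕ → ℝ) (hk : ∀ n j, j ≤ n → k n j ∈ Set.Icc (-k0) k0)
    (hsep : ∀ n : ℕ, ∀ j ≤ n,
      κ ^ n ≤ ∏ l ∈ (Finset.range (n + 1)).erase j, |k n l - k n j|)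
    (a : ℝ)
    (C : ℕ → ℕ → ℝ)
    (hC : ∀ n j, C n j = ∏ l ∈ (Finset.range (n + 1)).erase j,
      (k n l - a) / (k n l - k n j))
    (F : ℕ → ℂ → ℂ)
    (hF : ∀ n z, F n z = ∑ j ∈ Finset.range (n + 1),
      (C n j : ℂ) * Complex.exp (Complex.I * (k n j : ℂ) * z)) :
    TendstoA1 F (fun z => Complex.exp (Complex.I * (a : ℂ) * z)) ∧
    ∀ n : ℕ, ∃ μ : ComplexMeasure ℝ, cmSupportedIn μ (Set.Icc (-k0) k0) ∧
      (∀ B : Set ℝ, MeasurableSet B →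
        μ B = ∑ j ∈ Finset.range (n + 1), if k n j ∈ B then (C n j : ℂ) else 0) ∧
      ∀ z : ℂ, F n z = cmInt μ (fun x => Complex.exp (Complex.I * (x : ℂ) * z)) := by
  set M := max |a| k0
  set R := max 1 (2 * M / κ)
  have hkM : ∀ n, ∀ j ≤ n, |k n j| ≤ M := fun n j hj =>
    (abs_le.2 (hk n j hj)).trans (le_max_right _ _)
  refine ⟨tendstoA1_of_norm_sub_le (B := (2 * R + 1) * M) (by positivity)
    tendsto_add_two_div_two_pow fun n z => ?_, fun n => ?_⟩
  · simp only [hF, hC, ← Lagrange.eval_basis_eq_prod]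
    exact norm_sum_eval_basis_mul_exp_sub_exp_le hκ (hkM n) (le_max_left _ _) (le_max_left _ _)
      (le_max_right _ _) (hsep n) z
  · have hinj : Set.InjOn (k n) (Finset.range (n + 1) : Set ℕ) :=
      Set.injOn_of_prod_erase_abs_sub_pos fun j hj =>
        (pow_pos hκ n).trans_le (hsep n j (mem_range_succ_iff.1 hj))
    obtain ⟨μ, hsupp, happly, hint⟩ := exists_complexMeasure_sum_dirac hinj (C n)
      fun j hj => hk n j (mem_range_succ_iff.1 hj)
    exact ⟨μ, hsupp, happly, fun z => by rw [hF, hint]⟩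

/-- Corollary 4.2 of the paper. Given frequencies
`k_j(n) ∈ [-k0,k0]` with `Π_{l≠j} |k_l(n) - k_j(n)| ≥ κⁿ` and
`a ∈ ℝ∖[-k0,k0]`, the coefficients `C_j(n) = Π_{l≠j} (k_l(n)-a)/(k_l(n)-k_j(n))`
make `F_n(z) = Σ_{j≤n} C_j(n) e^{i k_j(n) z}` converge to `z ↦ e^{iaz}` in
`𝒜₁(ℂ)`; together with the representation by the complex measures
`μ_n = Σ_{j≤n} C_j(n) δ_{k_j(n)}` the sequence `F_n` is superoscillating. -/
theorem statement10 (k0 : ℝ) (hk0 : 0 < k0) (κ : ℝ) (hκ : 0 < κ)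
    (k : ℕ → ℕ → ℝ) (hk : ∀ n j, j ≤ n → k n j ∈ Set.Icc (-k0) k0)
    (hsep : ∀ n : ℕ, ∀ j ≤ n,
      κ ^ n ≤ ∏ l ∈ (Finset.range (n + 1)).erase j, |k n l - k n j|)
    (a : ℝ) (ha : a ∉ Set.Icc (-k0) k0)
    (C : ℕ → ℕ → ℝ)
    (hC : ∀ n j, C n j = ∏ l ∈ (Finset.range (n + 1)).erase j,
      (k n l - a) / (k n l - k n j))
    (F : ℕ → ℂ → ℂ)
    (hF : ∀ n z, F n z = ∑ j ∈ Finset.range (n + 1),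
      (C n j : ℂ) * Complex.exp (Complex.I * (k n j : ℂ) * z)) :
    TendstoA1 F (fun z => Complex.exp (Complex.I * (a : ℂ) * z)) ∧
    ∀ n : ℕ, ∃ μ : ComplexMeasure ℝ, cmSupportedIn μ (Set.Icc (-k0) k0) ∧
      (∀ B : Set ℝ, MeasurableSet B →
        μ B = ∑ j ∈ Finset.range (n + 1), if k n j ∈ B then (C n j : ℂ) else 0) ∧
      ∀ z : ℂ, F n z = cmInt μ (fun x => Complex.exp (Complex.I * (x : ℂ) * z)) :=
  statement10_general k0 κ hκ k hk hsep a C hC F hF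
end

section
/- Let H : ℂ → ℂ be an entire function with power series H(z) = Σ_{l=0}^∞ h_l z^l, let k0 > 0, and let μ be a complex Borel measure on [−k0,k0]. Define Ψ(t,z) = ∫_{−k0}^{k0} e^{iH(k)t} e^{ikz} dμ(k) for t, z ∈ ℂ. Then for every fixed t the function z ↦ Ψ(t,z) is entire, for every fixed z the function t ↦ Ψ(t,z) is entire, the series Σ_{l=0}^∞ h_l (−i)^l ∂_z^l Ψ(t,z) converges for all t, z ∈ ℂ, and Ψ solves the generalized Schrödinger equation i ∂_t Ψ(t,z) = − Σ_{l=0}^∞ h_l (−i)^l ∂_z^l Ψ(t,z) with initial condition Ψ(0,z) = ∫_{−k0}^{k0} e^{ikz} dμ(k). -/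
/-!
Splitting `μ` into the Jordan parts of its real and imaginary parts reduces everything to
integrals against finite measures concentrated on `[-k0, k0]`. There the integrand
`e^{iH(k)t} e^{ikz}` and its derivatives in `t` and `z` are bounded locally uniformly, so
differentiating under the integral sign gives `∂_z^l Ψ = ∫ (ik)^l e^{iH(k)t} e^{ikz} dμ` and
`∂_t Ψ = ∫ iH(k) e^{iH(k)t} e^{ikz} dμ`. As `(-i)^l (ik)^l = k^l`, the `l`-th term of the series is
`∫ h_l k^l e^{iH(k)t} e^{ikz} dμ`; these terms are dominated by `|h_l| k0^l`, which is summable,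
so the series may be summed under the integral to `∫ H(k) e^{iH(k)t} e^{ikz} dμ = -i ∂_t Ψ`.
-/

open MeasureTheory Complex Filter Set

lemma norm_cexp_mul_le {a w : ℂ} {A r : ℝ} (ha : ‖a‖ ≤ A) (hw : ‖w‖ ≤ r) :
    ‖cexp (a * w)‖ ≤ Real.exp (A * r) := by
  refine (norm_exp_le_exp_norm _).trans (Real.exp_le_exp.2 ?_)
  rw [norm_mul]
  exact mul_le_mul ha hw (norm_nonneg w) ((norm_nonneg a).trans ha)

lemma neg_I_pow_mul_I_mul_pow (x : ℂ) (l : ℕ) : (-I) ^ l * (I * x) ^ l = x ^ l := by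
  rw [← mul_pow, ← mul_assoc, neg_mul, I_mul_I, neg_neg, one_mul]

section FiniteMeasure

variable {α : Type*} [MeasurableSpace α] {ν : Measure α} [IsFiniteMeasure ν]

lemma hasDerivAt_integral_mul_cexp {a g : α → ℂ} {A G : ℝ} (ha : AEStronglyMeasurable a ν)
    (hg : AEStronglyMeasurable g ν) (haA : ∀ᵐ k ∂ν, ‖a k‖ ≤ A) (hgG : ∀ᵐ k ∂ν, ‖g k‖ ≤ G)
    (w : ℂ) :
    HasDerivAt (fun w => ∫ k, g k * cexp (a k * w) ∂ν)
      (∫ k, a k * g k * cexp (a k * w) ∂ν) w := by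
  have hF_meas : ∀ v : ℂ, AEStronglyMeasurable (fun k => g k * cexp (a k * v)) ν :=
    fun v => hg.mul (continuous_exp.comp_aestronglyMeasurable (ha.mul_const v))
  have hF_int : Integrable (fun k => g k * cexp (a k * w)) ν := by
    refine .of_bound (hF_meas w) (G * Real.exp (A * ‖w‖)) ?_
    filter_upwards [haA, hgG] with k hak hgk
    rw [norm_mul]
    exact mul_le_mul hgk (norm_cexp_mul_le hak le_rfl) (norm_nonneg _)
      ((norm_nonneg _).trans hgk)
  refine (hasDerivAt_integral_of_dominated_loc_of_deriv_le (Metric.ball_mem_nhds w one_pos)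
    (.of_forall hF_meas) hF_int (F' := fun v k => a k * g k * cexp (a k * v))
    ((ha.mul hg).mul (continuous_exp.comp_aestronglyMeasurable
      (ha.mul_const w))) (bound := fun _ => A * G * Real.exp (A * (‖w‖ + 1)))
    ?_ (integrable_const _) (.of_forall fun k v _ => ?_)).2
  · filter_upwards [haA, hgG] with k hak hgk v hv
    have hvw : ‖v‖ ≤ ‖w‖ + 1 := by
      linarith [norm_le_norm_add_norm_sub' v w, mem_ball_iff_norm.1 hv]
    have hA : 0 ≤ A := (norm_nonneg _).trans hak
    have hG : 0 ≤ G := (norm_nonneg _).trans hgk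
    rw [norm_mul, norm_mul]
    gcongr
    exact norm_cexp_mul_le hak hvw
  · simpa [mul_comm, mul_assoc, mul_left_comm] using
      (((hasDerivAt_id v).const_mul (a k)).cexp).const_mul (g k)

lemma hasSum_integral_mul_of_hasSum_pow {h : ℕ → ℂ} {φ f g : α → ℂ} {R G : ℝ}
    (hs : Summable fun l => ‖h l‖ * R ^ l) (hφ : AEStronglyMeasurable φ ν)
    (hg : AEStronglyMeasurable g ν) (hφR : ∀ᵐ k ∂ν, ‖φ k‖ ≤ R) (hgG : ∀ᵐ k ∂ν, ‖g k‖ ≤ G)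
    (hf : ∀ᵐ k ∂ν, HasSum (fun l => h l * φ k ^ l) (f k)) :
    HasSum (fun l => ∫ k, h l * φ k ^ l * g k ∂ν) (∫ k, f k * g k ∂ν) := by
  refine hasSum_integral_of_dominated_convergence (fun l _ => ‖h l‖ * R ^ l * G)
    (fun l => (hφ.pow l).const_mul (h l) |>.mul hg) (fun l => ?_)
    (.of_forall fun _ => hs.mul_right G) (integrable_const _) ?_
  · filter_upwards [hφR, hgG] with k hφk hgk
    have hpow : ‖h l * φ k ^ l‖ ≤ ‖h l‖ * R ^ l := by
      rw [norm_mul, norm_pow]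
      gcongr
    rw [norm_mul]
    exact mul_le_mul hpow hgk (norm_nonneg _) ((norm_nonneg _).trans hpow)
  · filter_upwards [hf] with k hfk
    exact hfk.mul_right (g k)

end FiniteMeasure

lemma cmInt_const_mul (μ : ComplexMeasure ℝ) (c : ℂ) (f : ℝ → ℂ) :
    cmInt μ (fun k => c * f k) = c * cmInt μ f := by
  simp only [cmInt, integral_const_mul]
  ring

lemma mul_neg_I_pow_mul_cmInt (μ : ComplexMeasure ℝ) (c : ℂ) (l : ℕ) (f : ℝ → ℂ) :
    c * (-I) ^ l * cmInt μ (fun k => (I * k) ^ l * f k) =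
      cmInt μ (fun k => c * (k : ℂ) ^ l * f k) := by
  rw [← cmInt_const_mul]
  congr 1
  ext k
  linear_combination c * f k * neg_I_pow_mul_I_mul_pow k l

section Support

variable {α : Type*} [MeasurableSpace α] {S : Set α}

/-- The counting measure on `S` vanishes exactly on the sets disjoint from `S`, so `s` is
absolutely continuous with respect to it. -/
lemma SignedMeasure.ae_mem_jordanDecomposition {s : SignedMeasure α} (hS : MeasurableSet S)
    (hs : ∀ B, MeasurableSet B → Disjoint B S → s B = 0) :
    (∀ᵐ x ∂s.toJordanDecomposition.posPart, x ∈ S) ∧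
      ∀ᵐ x ∂s.toJordanDecomposition.negPart, x ∈ S := by
  have hac : s ≪ᵥ (Measure.count.restrict S).toENNRealVectorMeasure := by
    refine VectorMeasure.AbsolutelyContinuous.mk fun B hB hB0 => hs B hB ?_
    rw [Measure.toENNRealVectorMeasure_apply_measurable hB, Measure.restrict_apply hB,
      Measure.count_eq_zero_iff] at hB0
    exact Set.disjoint_iff_inter_eq_empty.2 hB0
  rw [s.absolutelyContinuous_ennreal_iff, VectorMeasure.ennrealToMeasure_toENNRealVectorMeasure,
    s.totalVariation_absolutelyContinuous_iff] at hac
  exact ⟨hac.1.ae_le (ae_restrict_mem hS), hac.2.ae_le (ae_restrict_mem hS)⟩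

variable {μ : ComplexMeasure ℝ} {S : Set ℝ}

lemma cmSupportedIn.ae_mem (hμ : cmSupportedIn μ S) (hS : MeasurableSet S) :
    ((∀ᵐ x ∂(ComplexMeasure.re μ).toJordanDecomposition.posPart, x ∈ S) ∧
      ∀ᵐ x ∂(ComplexMeasure.re μ).toJordanDecomposition.negPart, x ∈ S) ∧
    ((∀ᵐ x ∂(ComplexMeasure.im μ).toJordanDecomposition.posPart, x ∈ S) ∧
      ∀ᵐ x ∂(ComplexMeasure.im μ).toJordanDecomposition.negPart, x ∈ S) :=
  ⟨SignedMeasure.ae_mem_jordanDecomposition hS fun B hB hBS =>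
      show (μ B).re = 0 by rw [hμ B hB hBS, zero_re],
    SignedMeasure.ae_mem_jordanDecomposition hS fun B hB hBS =>
      show (μ B).im = 0 by rw [hμ B hB hBS, zero_im]⟩

lemma hasDerivAt_cmInt (hμ : cmSupportedIn μ S) (hS : MeasurableSet S) {F : ℂ → ℝ → ℂ}
    {F' : ℝ → ℂ} {x : ℂ}
    (hF : ∀ (ν : Measure ℝ) [IsFiniteMeasure ν], (∀ᵐ k ∂ν, k ∈ S) →
      HasDerivAt (fun w => ∫ k, F w k ∂ν) (∫ k, F' k ∂ν) x) :
    HasDerivAt (fun w => cmInt μ (F w)) (cmInt μ F') x := by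
  obtain ⟨⟨h₁, h₂⟩, h₃, h₄⟩ := hμ.ae_mem hS
  exact ((hF _ h₁).sub (hF _ h₂)).add (((hF _ h₃).sub (hF _ h₄)).const_mul I)

lemma hasSum_cmInt (hμ : cmSupportedIn μ S) (hS : MeasurableSet S) {F : ℕ → ℝ → ℂ}
    {f : ℝ → ℂ}
    (hF : ∀ (ν : Measure ℝ) [IsFiniteMeasure ν], (∀ᵐ k ∂ν, k ∈ S) →
      HasSum (fun n => ∫ k, F n k ∂ν) (∫ k, f k ∂ν)) :
    HasSum (fun n => cmInt μ (F n)) (cmInt μ f) := by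
  obtain ⟨⟨h₁, h₂⟩, h₃, h₄⟩ := hμ.ae_mem hS
  exact ((hF _ h₁).sub (hF _ h₂)).add (((hF _ h₃).sub (hF _ h₄)).mul_left I)

end Support

section PowerSeries

variable {h : ℕ → ℂ} {H : ℂ → ℂ}

lemma summable_norm_mul_pow_of_hasSum (hH : ∀ z, HasSum (fun l => h l * z ^ l) (H z)) (R : ℝ) :
    Summable fun l => ‖h l‖ * R ^ l :=
  .of_norm (by simpa [norm_mul, norm_pow] using (hH R).summable.norm)

lemma norm_le_tsum_of_hasSum_pow (hH : ∀ z, HasSum (fun l => h l * z ^ l) (H z)) {x : ℂ}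
    {R : ℝ} (hx : ‖x‖ ≤ R) : ‖H x‖ ≤ ∑' l, ‖h l‖ * R ^ l :=
  (hH x).norm_le_of_bounded (summable_norm_mul_pow_of_hasSum hH R).hasSum fun l => by
    rw [norm_mul, norm_pow]
    gcongr

lemma measurable_of_hasSum_pow (hH : ∀ z, HasSum (fun l => h l * z ^ l) (H z)) :
    Measurable H :=
  measurable_of_tendsto_metrizable (fun n => by fun_prop)
    (tendsto_pi_nhds.2 fun z => (hH z).tendsto_sum_nat)

end PowerSeries

noncomputable def planeWave (H : ℂ → ℂ) (t z : ℂ) (k : ℝ) : ℂ :=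
  cexp (I * H k * t) * cexp (I * k * z)

section PlaneWave

variable {H : ℂ → ℂ} {C R : ℝ} {ν : Measure ℝ} [IsFiniteMeasure ν]

lemma measurable_planeWave (hHm : Measurable H) (t z : ℂ) : Measurable (planeWave H t z) := by
  unfold planeWave
  fun_prop

lemma norm_I_mul_ofReal_le {k R : ℝ} (hk : |k| ≤ R) : ‖I * k‖ ≤ R := by
  simpa using hk

lemma norm_planeWave_le (hHC : ∀ x : ℝ, |x| ≤ R → ‖H x‖ ≤ C) (t z : ℂ) {k : ℝ} (hk : |k| ≤ R) :
    ‖planeWave H t z k‖ ≤ Real.exp (C * ‖t‖) * Real.exp (R * ‖z‖) := by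
  rw [planeWave, norm_mul]
  have hC : ‖I * H k‖ ≤ C := by simpa using hHC k hk
  gcongr
  exacts [norm_cexp_mul_le hC le_rfl, norm_cexp_mul_le (norm_I_mul_ofReal_le hk) le_rfl]

lemma hasDerivAt_integral_pow_mul_planeWave (hHm : Measurable H)
    (hHC : ∀ x : ℝ, |x| ≤ R → ‖H x‖ ≤ C) (hν : ∀ᵐ k ∂ν, |k| ≤ R) (l : ℕ) (t z : ℂ) :
    HasDerivAt (fun w => ∫ k, (I * k) ^ l * planeWave H t w k ∂ν)
      (∫ k, (I * k) ^ (l + 1) * planeWave H t z k ∂ν) z := by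
  have key := hasDerivAt_integral_mul_cexp (ν := ν) (a := fun k : ℝ => I * k)
    (g := fun k : ℝ => (I * k) ^ l * cexp (I * H k * t)) (by fun_prop) (by fun_prop)
    (hν.mono fun k hk => norm_I_mul_ofReal_le hk) (G := R ^ l * Real.exp (C * ‖t‖))
    (hν.mono fun k hk => ?_) z
  · convert key using 1
    · ext w
      simp only [planeWave, mul_assoc]
    · simp only [planeWave, pow_succ]
      congr 1
      ext k
      ring
  · have hC : ‖I * H k‖ ≤ C := by simpa using hHC k hk
    have hR : 0 ≤ R := (abs_nonneg k).trans hk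
    rw [norm_mul, norm_pow]
    gcongr
    exacts [norm_I_mul_ofReal_le hk, norm_cexp_mul_le hC le_rfl]

lemma hasDerivAt_integral_planeWave_time (hHm : Measurable H)
    (hHC : ∀ x : ℝ, |x| ≤ R → ‖H x‖ ≤ C) (hν : ∀ᵐ k ∂ν, |k| ≤ R) (t z : ℂ) :
    HasDerivAt (fun s => ∫ k, planeWave H s z k ∂ν) (∫ k, I * H k * planeWave H t z k ∂ν) t := by
  have key := hasDerivAt_integral_mul_cexp (ν := ν) (a := fun k : ℝ => I * H k)
    (g := fun k : ℝ => cexp (I * k * z))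
    ((hHm.comp measurable_ofReal).const_mul I).aestronglyMeasurable (by fun_prop)
    (hν.mono fun k hk => show ‖I * H k‖ ≤ C by simpa using hHC k hk)
    (hν.mono fun k hk => norm_cexp_mul_le (norm_I_mul_ofReal_le hk) le_rfl) t
  convert key using 1
  · ext s
    simp only [planeWave, mul_comm]
  · simp only [planeWave]
    congr 1
    ext k
    ring

lemma hasSum_integral_mul_planeWave {h : ℕ → ℂ} (hH : ∀ z, HasSum (fun l => h l * z ^ l) (H z))
    (hHm : Measurable H) (hHC : ∀ x : ℝ, |x| ≤ R → ‖H x‖ ≤ C) (hν : ∀ᵐ k ∂ν, |k| ≤ R)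
    (t z : ℂ) :
    HasSum (fun l => ∫ k, h l * (k : ℂ) ^ l * planeWave H t z k ∂ν)
      (∫ k, H k * planeWave H t z k ∂ν) :=
  hasSum_integral_mul_of_hasSum_pow (summable_norm_mul_pow_of_hasSum hH R) (by fun_prop)
    (measurable_planeWave hHm t z).aestronglyMeasurable (hν.mono fun k hk => by simpa using hk)
    (hν.mono fun k hk => norm_planeWave_le hHC t z hk) (.of_forall fun k => hH k)

end PlaneWave

lemma iteratedDeriv_eq_of_hasDerivAt {𝕜 F : Type*} [NontriviallyNormedField 𝕜]
    [NormedAddCommGroup F] [NormedSpace 𝕜 F] {P : ℕ → 𝕜 → F}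
    (hP : ∀ l x, HasDerivAt (P l) (P (l + 1) x) x) (l : ℕ) : iteratedDeriv l (P 0) = P l := by
  induction l with
  | zero => exact iteratedDeriv_zero
  | succ l ih => rw [iteratedDeriv_succ, ih]; exact funext fun x => (hP l x).deriv

theorem statement14_general (H : ℂ → ℂ) (h : ℕ → ℂ)
    (hH : ∀ z : ℂ, HasSum (fun l : ℕ => h l * z ^ l) (H z))
    (k0 : ℝ) (μ : ComplexMeasure ℝ)
    (hsupp : cmSupportedIn μ (Set.Icc (-k0) k0))
    (Ψ : ℂ → ℂ → ℂ)
    (hΨ : ∀ t z : ℂ, Ψ t z = cmInt μ (fun k =>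
      Complex.exp (Complex.I * H (k : ℂ) * t) * Complex.exp (Complex.I * (k : ℂ) * z))) :
    (∀ t : ℂ, Differentiable ℂ (fun z => Ψ t z)) ∧
    (∀ z : ℂ, Differentiable ℂ (fun t => Ψ t z)) ∧
    (∀ t z : ℂ, Summable (fun l : ℕ =>
      h l * (-Complex.I) ^ l * iteratedDeriv l (fun w => Ψ t w) z)) ∧
    (∀ t z : ℂ, Complex.I * deriv (fun s => Ψ s z) t =
      -∑' l : ℕ, h l * (-Complex.I) ^ l * iteratedDeriv l (fun w => Ψ t w) z) ∧
    (∀ z : ℂ, Ψ 0 z = cmInt μ (fun k => Complex.exp (Complex.I * (k : ℂ) * z))) := by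
  obtain rfl : Ψ = fun t z => cmInt μ (planeWave H t z) := funext fun t => funext (hΨ t)
  have hHm : Measurable H := measurable_of_hasSum_pow hH
  have hHC (x : ℝ) (hx : |x| ≤ k0) : ‖H x‖ ≤ ∑' l, ‖h l‖ * k0 ^ l :=
    norm_le_tsum_of_hasSum_pow hH (by simpa using hx)
  have hν (ν : Measure ℝ) (hνS : ∀ᵐ k ∂ν, k ∈ Icc (-k0) k0) : ∀ᵐ k ∂ν, |k| ≤ k0 :=
    hνS.mono fun k hk => abs_le.2 hk
  set P : ℂ → ℕ → ℂ → ℂ := fun t l z => cmInt μ fun k => (I * k) ^ l * planeWave H t z k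
  have hz (t : ℂ) (l : ℕ) (z : ℂ) : HasDerivAt (P t l) (P t (l + 1) z) z :=
    hasDerivAt_cmInt hsupp measurableSet_Icc fun ν _ hνS =>
      hasDerivAt_integral_pow_mul_planeWave hHm hHC (hν ν hνS) l t z
  have hiter (t : ℂ) (l : ℕ) :
      iteratedDeriv l (fun z => cmInt μ (planeWave H t z)) = P t l := by
    simpa [P] using iteratedDeriv_eq_of_hasDerivAt (hz t) l
  have ht (t z : ℂ) : HasDerivAt (fun s => cmInt μ (planeWave H s z))
      (cmInt μ fun k => I * H k * planeWave H t z k) t :=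
    hasDerivAt_cmInt hsupp measurableSet_Icc fun ν _ hνS =>
      hasDerivAt_integral_planeWave_time hHm hHC (hν ν hνS) t z
  have hsum (t z : ℂ) : HasSum
      (fun l => h l * (-I) ^ l * iteratedDeriv l (fun w => cmInt μ (planeWave H t w)) z)
      (cmInt μ fun k => H k * planeWave H t z k) := by
    convert hasSum_cmInt hsupp measurableSet_Icc fun ν _ hνS =>
      hasSum_integral_mul_planeWave hH hHm hHC (hν ν hνS) t z using 2 with l
    rw [hiter, mul_neg_I_pow_mul_cmInt]
  refine ⟨fun t z => ?_, fun z t => (ht t z).differentiableAt, fun t z => (hsum t z).summable,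
    fun t z => ?_, fun z => congrArg (cmInt μ) (funext fun k => by simp [planeWave])⟩
  · simpa [P] using (hz t 0 z).differentiableAt
  · rw [(ht t z).deriv, (hsum t z).tsum_eq, ← cmInt_const_mul, ← neg_one_mul, ← cmInt_const_mul]
    congr 1
    ext k
    linear_combination (H k * planeWave H t z k) * I_sq

/-- Lemma 5.1 of the paper. For an entire function
`H(z) = Σ h_l z^l` and a complex Borel measure `μ` on `[-k0,k0]`, the function
`Ψ(t,z) = ∫_{-k0}^{k0} e^{iH(k)t} e^{ikz} dμ(k)` is entire in each variable,
the series `Σ_l h_l (-i)^l ∂_z^l Ψ(t,z)` converges, and `Ψ` solves the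
generalized Schrödinger equation `i ∂_t Ψ = -Σ_l h_l (-i)^l ∂_z^l Ψ` with
initial condition `Ψ(0,z) = ∫_{-k0}^{k0} e^{ikz} dμ(k)`. -/
theorem statement14 (H : ℂ → ℂ) (h : ℕ → ℂ)
    (hH : ∀ z : ℂ, HasSum (fun l : ℕ => h l * z ^ l) (H z))
    (k0 : ℝ) (hk0 : 0 < k0) (μ : ComplexMeasure ℝ)
    (hsupp : cmSupportedIn μ (Set.Icc (-k0) k0))
    (Ψ : ℂ → ℂ → ℂ)
    (hΨ : ∀ t z : ℂ, Ψ t z = cmInt μ (fun k =>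
      Complex.exp (Complex.I * H (k : ℂ) * t) * Complex.exp (Complex.I * (k : ℂ) * z))) :
    (∀ t : ℂ, Differentiable ℂ (fun z => Ψ t z)) ∧
    (∀ z : ℂ, Differentiable ℂ (fun t => Ψ t z)) ∧
    (∀ t z : ℂ, Summable (fun l : ℕ =>
      h l * (-Complex.I) ^ l * iteratedDeriv l (fun w => Ψ t w) z)) ∧
    (∀ t z : ℂ, Complex.I * deriv (fun s => Ψ s z) t =
      -∑' l : ℕ, h l * (-Complex.I) ^ l * iteratedDeriv l (fun w => Ψ t w) z) ∧
    (∀ z : ℂ, Ψ 0 z = cmInt μ (fun k => Complex.exp (Complex.I * (k : ℂ) * z))) :=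
  statement14_general H h hH k0 μ hsupp Ψ hΨ
end
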